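/- Let R be a commutative Noetherian ring of prime characteristic p such that for each minimal prime P of R, the domain R/P admits a module-finite integral extension domain that is F-regular. Then tight closure commutes with localization in R. -/

import Mathlib

/-- The `q`-th Frobenius power `I^{[q]}` of an ideal `I`: the ideal generated by
`q`-th powers of elements of `I`. -/
def Ideal.frobeniusPower {R : Type*} [CommRing R] (I : Ideal R) (q : ℕ) : Ideal R :=
  Ideal.span ((fun x => x ^ q) '' (I : Set R))

/-- `R°`: the set of elements of `R` not contained in any minimal prime of `R`. -/
def primeComplement (R : Type*) [CommRing R] : Set R :=
  { c | ∀ P ∈ minimalPrimes R, c ∉ P }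

/-- The tight closure `I*` of an ideal `I` in a ring of characteristic `p`:
elements `z` such that `c * z ^ (p ^ e) ∈ I ^ [p ^ e]` for some `c ∈ R°`
and all sufficiently large `e`. -/
def tightClosure (p : ℕ) {R : Type*} [CommRing R] (I : Ideal R) : Set R :=
  { z | ∃ c ∈ primeComplement R, ∃ N : ℕ, ∀ e : ℕ, N ≤ e →
      c * z ^ p ^ e ∈ I.frobeniusPower (p ^ e) }

/-- Tight closure commutes with localization in `R`: for every ideal `I` and
multiplicative set `U`, `I* · R[U⁻¹] = (I · R[U⁻¹])*`. -/
def TightClosureCommutesWithLocalization (p : ℕ) (R : Type*) [CommRing R] : Prop :=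
  ∀ (I : Ideal R) (U : Submonoid R),
    (Ideal.map (algebraMap R (Localization U)) (Ideal.span (tightClosure p I)) :
        Set (Localization U))
      = tightClosure p (Ideal.map (algebraMap R (Localization U)) I)

/-- A ring is F-regular if every ideal is tightly closed, both in the ring itself
and in all of its localizations. -/
def FRegular (p : ℕ) (S : Type*) [CommRing S] : Prop :=
  (∀ I : Ideal S, tightClosure p I = (I : Set S)) ∧
    ∀ (U : Submonoid S) (J : Ideal (Localization U)),
      tightClosure p J = (J : Set (Localization U))


/-!
Tight closure can be tested modulo the minimal primes: `z ∈ I*` as soon as the image of `z` lies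
in `(I (R/P))*` for every minimal prime `P`, because elements `d_P` lying in all minimal primes
but `P` glue test elements for the `R/P` into one test element for `R`, up to nilpotents that a
large Frobenius power kills. In the domain `R/P`, an element whose image lies in `I S` for a
module-finite extension domain `S` is in `(I (R/P))*`: an `R/P`-linear map `S → R/P` that does not
vanish at `1` pulls `(I S)^[q]` back into `I^[q]`.

Persistence of tight closure gives `I* R_U ⊆ (I R_U)*`. Conversely, if `z/u ∈ (I R_U)*` and `P`
is disjoint from `U`, then `z/u ∈ I S_U`, because `S_U` is tightly closed by F-regularity of `S`.
This single membership descends to `wz ∈ I S` for some `w ∈ U`, and taking the product of the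
finitely many `w` places `wz` in `I*` by the test above.
-/

section

variable {p : ℕ}

section FrobeniusPower

variable {A B : Type*} [CommRing A] [CommRing B]

theorem Ideal.pow_mem_frobeniusPower {I : Ideal A} {x : A} (hx : x ∈ I) (q : ℕ) :
    x ^ q ∈ I.frobeniusPower q :=
  Ideal.subset_span ⟨x, hx, rfl⟩

theorem Ideal.frobeniusPower_eq_map_iterateFrobenius [ExpChar A p] (I : Ideal A) (e : ℕ) :
    I.frobeniusPower (p ^ e) = I.map (iterateFrobenius A p e) :=
  rfl

theorem Ideal.map_frobeniusPower [ExpChar B p] (f : A →+* B) (I : Ideal A) (e : ℕ) :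
    (I.frobeniusPower (p ^ e)).map f = (I.map f).frobeniusPower (p ^ e) := by
  rw [Ideal.frobeniusPower, Ideal.map_span, Ideal.frobeniusPower_eq_map_iterateFrobenius,
    Ideal.map_map, Set.image_image]
  exact congrArg Ideal.span (Set.image_congr fun x _ => map_pow f x _)

theorem Ideal.frobeniusPower_frobeniusPower [ExpChar A p] (I : Ideal A) (e m : ℕ) :
    (I.frobeniusPower (p ^ e)).frobeniusPower (p ^ m) = I.frobeniusPower (p ^ (m + e)) := by
  simp only [Ideal.frobeniusPower_eq_map_iterateFrobenius, Ideal.map_map, iterateFrobenius_add]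

end FrobeniusPower

section PrimeComplement

variable {A B : Type*} [CommRing A] [CommRing B]

theorem mem_primeComplement_iff_ne_zero [IsDomain A] {c : A} :
    c ∈ primeComplement A ↔ c ≠ 0 := by
  simp [primeComplement, minimalPrimes, Ideal.minimalPrimes_eq_subsingleton_self]

theorem one_mem_primeComplement : (1 : A) ∈ primeComplement A :=
  fun P hP h1 => hP.1.1.ne_top ((Ideal.eq_top_iff_one P).mpr h1)

theorem pow_mem_primeComplement {c : A} (hc : c ∈ primeComplement A) (n : ℕ) :
    c ^ n ∈ primeComplement A :=
  fun P hP hcP => hc P hP (hP.1.1.mem_of_pow_mem n hcP)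

theorem mul_mem_primeComplement {c d : A} (hc : c ∈ primeComplement A)
    (hd : d ∈ primeComplement A) : c * d ∈ primeComplement A :=
  fun P hP hcd => (hP.1.1.mem_or_mem hcd).elim (hc P hP) (hd P hP)

theorem map_mem_primeComplement_of_ker_mem_minimalPrimes [IsDomain B] {f : A →+* B}
    (hf : RingHom.ker f ∈ minimalPrimes A) {c : A} (hc : c ∈ primeComplement A) :
    f c ∈ primeComplement B :=
  mem_primeComplement_iff_ne_zero.mpr fun h0 => hc _ hf (RingHom.mem_ker.mpr h0)

theorem IsLocalization.mem_minimalPrimes_iff_under [Algebra A B] (U : Submonoid A)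
    [IsLocalization U B] {Q : Ideal B} :
    Q ∈ minimalPrimes B ↔ Q.under A ∈ minimalPrimes A := by
  have := IsLocalization.minimalPrimes_map U B (⊥ : Ideal A)
  rw [Ideal.map_bot] at this
  exact Set.ext_iff.mp this Q

theorem IsLocalization.algebraMap_mem_primeComplement [Algebra A B] (U : Submonoid A)
    [IsLocalization U B] {c : A} (hc : c ∈ primeComplement A) :
    algebraMap A B c ∈ primeComplement B :=
  fun _ hQ hcQ => hc _ ((mem_minimalPrimes_iff_under U).mp hQ) hcQ

end PrimeComplement

theorem CharP.of_ringHom_of_prime [Fact p.Prime] {A B : Type*} [CommRing A] [CommRing B]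
    [CharP A p] [Nontrivial B] (f : A →+* B) : CharP B p :=
  (CharP.charP_iff_prime_eq_zero Fact.out).mpr <| by
    rw [← map_natCast f, CharP.cast_eq_zero, map_zero]

section TightClosure

variable {A B : Type*} [CommRing A] [CommRing B]

theorem map_mem_tightClosure_map [ExpChar B p] (f : A →+* B)
    (hf : ∀ c ∈ primeComplement A, f c ∈ primeComplement B) {I : Ideal A} {z : A}
    (hz : z ∈ tightClosure p I) : f z ∈ tightClosure p (I.map f) := by
  obtain ⟨c, hc, N, hN⟩ := hz
  refine ⟨f c, hf c hc, N, fun e he => ?_⟩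
  rw [← map_pow, ← map_mul, ← Ideal.map_frobeniusPower]
  exact Ideal.mem_map_of_mem f (hN e he)

theorem mul_mem_tightClosure (x : A) {I : Ideal A} {z : A} (hz : z ∈ tightClosure p I) :
    x * z ∈ tightClosure p I := by
  obtain ⟨c, hc, N, hN⟩ := hz
  refine ⟨c, hc, N, fun e he => ?_⟩
  rw [mul_pow, mul_left_comm]
  exact Ideal.mul_mem_left _ _ (hN e he)

variable (p) in
def Ideal.tightClosure [ExpChar A p] (I : Ideal A) : Ideal A where
  carrier := _root_.tightClosure p I
  zero_mem' := ⟨1, one_mem_primeComplement, 0, fun e _ => by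
    simp [zero_pow (expChar_pow_pos A p e).ne']⟩
  add_mem' := by
    rintro x y ⟨c, hc, M, hM⟩ ⟨d, hd, N, hN⟩
    refine ⟨c * d, mul_mem_primeComplement hc hd, max M N, fun e he => ?_⟩
    rw [add_pow_expChar_pow, show c * d * (x ^ p ^ e + y ^ p ^ e) =
      d * (c * x ^ p ^ e) + c * (d * y ^ p ^ e) by ring]
    exact Ideal.add_mem _ (Ideal.mul_mem_left _ _ (hM e (le_of_max_le_left he)))
      (Ideal.mul_mem_left _ _ (hN e (le_of_max_le_right he)))
  smul_mem' x _ := mul_mem_tightClosure x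

theorem Ideal.coe_tightClosure [ExpChar A p] (I : Ideal A) :
    (I.tightClosure p : Set A) = _root_.tightClosure p I :=
  rfl

theorem Ideal.map_tightClosure_le [ExpChar A p] [ExpChar B p] (f : A →+* B)
    (hf : ∀ c ∈ primeComplement A, f c ∈ primeComplement B) (I : Ideal A) :
    (I.tightClosure p).map f ≤ (I.map f).tightClosure p :=
  Ideal.map_le_iff_le_comap.mpr fun _ hz => map_mem_tightClosure_map f hf hz

theorem tightClosure_eq_of_subsingleton [Subsingleton A] (I : Ideal A) :
    tightClosure p I = I := by
  refine Set.eq_of_subset_of_subset (fun z _ => by simp [Subsingleton.elim z 0]) fun z _ => ?_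
  exact ⟨1, one_mem_primeComplement, 0, fun e _ => by
    simp [Subsingleton.elim (1 * z ^ p ^ e) 0]⟩

end TightClosure

theorem Module.exists_linearMap_apply_one_ne_zero (D T : Type*) [CommRing D] [IsDomain D]
    [CommRing T] [IsDomain T] [Algebra D T] [Module.Finite D T] [FaithfulSMul D T] :
    ∃ φ : T →ₗ[D] D, φ 1 ≠ 0 := by
  let K := FractionRing D
  let F := FractionRing T
  let _ : Algebra K F := FractionRing.liftAlgebra D F
  obtain ⟨ψ, hψ⟩ : ∃ ψ : Module.Dual K F, ψ 1 ≠ 0 := by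
    by_contra! h
    exact one_ne_zero ((Module.forall_dual_apply_eq_zero_iff K (1 : F)).mp h)
  -- Restricted to `T`, the functional `ψ` has values in `a⁻¹ D` for some `a ≠ 0`.
  let ψT : T →ₗ[D] K := (ψ.restrictScalars D).comp (IsScalarTower.toAlgHom D T F).toLinearMap
  obtain ⟨a, ha, hint⟩ := FractionalIdeal.isFractional_of_fg (S := nonZeroDivisors D)
    ((Module.Finite.fg_top (R := D) (M := T)).map ψT)
  have hrange : ∀ t, a • ψT t ∈ LinearMap.range (Algebra.linearMap D K) := fun t =>
    hint _ ⟨t, trivial, rfl⟩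
  let ι := LinearEquiv.ofInjective (Algebra.linearMap D K) (IsFractionRing.injective D K)
  refine ⟨ι.symm.toLinearMap.comp ((a • ψT).codRestrict _ hrange), fun h0 => hψ ?_⟩
  have haψ : a • ψ 1 = 0 := by
    have h1 := congrArg (Subtype.val ∘ ι) h0
    simp only [Function.comp_apply, LinearMap.coe_comp, LinearEquiv.coe_coe,
      LinearEquiv.apply_symm_apply, LinearMap.codRestrict_apply, map_zero] at h1
    simpa [ψT] using h1
  exact (smul_eq_zero.mp haψ).resolve_left (nonZeroDivisors.ne_zero ha)

section FiniteExtension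

variable {D T : Type*} [CommRing D] [CommRing T] [Algebra D T]

theorem LinearMap.mem_of_mem_map_algebraMap (φ : T →ₗ[D] D) {J : Ideal D} {t : T}
    (ht : t ∈ J.map (algebraMap D T)) : φ t ∈ J := by
  rw [← Submodule.restrictScalars_mem D, ← Ideal.smul_top_eq_map] at ht
  refine Submodule.smul_induction_on ht (fun r hr n _ => ?_) fun x y hx hy => ?_
  · rw [map_smul]
    exact J.mul_mem_right _ hr
  · rw [map_add]
    exact J.add_mem hx hy

theorem mem_tightClosure_of_algebraMap_mem_map [Fact p.Prime] [IsDomain D] [CharP D p]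
    [IsDomain T] [Module.Finite D T] [FaithfulSMul D T] {I : Ideal D} {z : D}
    (hz : algebraMap D T z ∈ I.map (algebraMap D T)) : z ∈ tightClosure p I := by
  have : CharP T p := charP_of_injective_algebraMap' D p
  obtain ⟨φ, hφ⟩ := Module.exists_linearMap_apply_one_ne_zero D T
  refine ⟨φ 1, mem_primeComplement_iff_ne_zero.mpr hφ, 0, fun e _ => ?_⟩
  have hzq : algebraMap D T (z ^ p ^ e) ∈ (I.frobeniusPower (p ^ e)).map (algebraMap D T) := by
    rw [map_pow, Ideal.map_frobeniusPower]
    exact Ideal.pow_mem_frobeniusPower hz _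
  have hφz := φ.mem_of_mem_map_algebraMap hzq
  rwa [← mul_one (algebraMap D T _), ← Algebra.smul_def, map_smul, smul_eq_mul,
    mul_comm] at hφz

end FiniteExtension

section MinimalPrimes

variable {A : Type*} [CommRing A]

theorem mem_nilradical_of_forall_minimalPrimes {x : A} (h : ∀ P ∈ minimalPrimes A, x ∈ P) :
    x ∈ nilradical A := by
  rw [nilradical, ← Ideal.sInf_minimalPrimes]
  exact Submodule.mem_sInf.mpr h

theorem exists_notMem_forall_ne_mem_minimalPrimes [IsNoetherianRing A] {P : Ideal A}
    (hP : P ∈ minimalPrimes A) :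
    ∃ d ∉ P, ∀ P' ∈ minimalPrimes A, P' ≠ P → d ∈ P' := by
  have hfin := minimalPrimes.finite_of_isNoetherianRing A
  have hnle : ¬ (hfin.toFinset.erase P).inf id ≤ P := by
    intro hle
    obtain ⟨P', hP', hP'P⟩ := (hP.1.1.inf_le').mp hle
    rw [Finset.mem_erase, Set.Finite.mem_toFinset] at hP'
    exact hP'.1 (le_antisymm hP'P (hP.2 hP'.2.1 hP'P))
  obtain ⟨d, hd, hdP⟩ := SetLike.not_le_iff_exists.mp hnle
  exact ⟨d, hdP, fun P' hP' hne =>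
    Finset.inf_le (f := id) (Finset.mem_erase.mpr ⟨hne, hfin.mem_toFinset.mpr hP'⟩) hd⟩

theorem mul_mem_sup_nilradical_of_mem_sup {P J : Ideal A} {d x : A}
    (hd : ∀ P' ∈ minimalPrimes A, P' ≠ P → d ∈ P') (hx : x ∈ J ⊔ P) :
    d * x ∈ J ⊔ nilradical A := by
  obtain ⟨a, ha, b, hb, rfl⟩ := Submodule.mem_sup.mp hx
  rw [mul_add]
  refine Submodule.add_mem_sup (J.mul_mem_left d ha) (mem_nilradical_of_forall_minimalPrimes ?_)
  intro P' hP'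
  by_cases hP'P : P' = P
  · exact P'.mul_mem_left d (hP'P ▸ hb)
  · exact P'.mul_mem_right b (hd P' hP' hP'P)

end MinimalPrimes

section Combination

variable {A : Type*} [CommRing A] [CharP A p] [Fact p.Prime]

theorem exists_mul_pow_mem_sup_of_mk_mem_tightClosure {P : Ideal A} [P.IsPrime] {I : Ideal A}
    {z : A} (hz : Ideal.Quotient.mk P z ∈ tightClosure p (I.map (Ideal.Quotient.mk P))) :
    ∃ c ∉ P, ∃ N, ∀ e ≥ N, c * z ^ p ^ e ∈ I.frobeniusPower (p ^ e) ⊔ P := by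
  have : CharP (A ⧸ P) p := CharP.of_ringHom_of_prime (Ideal.Quotient.mk P)
  obtain ⟨c', hc', N, hN⟩ := hz
  obtain ⟨c, rfl⟩ := Ideal.Quotient.mk_surjective c'
  refine ⟨c, fun hcP => mem_primeComplement_iff_ne_zero.mp hc'
    (Ideal.Quotient.eq_zero_iff_mem.mpr hcP), N, fun e he => ?_⟩
  have hcz := hN e he
  rw [← map_pow, ← map_mul, ← Ideal.map_frobeniusPower, ← Ideal.mem_comap,
    Ideal.comap_map_of_surjective' _ Ideal.Quotient.mk_surjective, Ideal.mk_ker] at hcz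
  exact hcz

theorem mem_tightClosure_of_mul_pow_mem_sup_nilradical [IsNoetherianRing A] {I : Ideal A}
    {c z : A} (hc : c ∈ primeComplement A) (N : ℕ)
    (hN : ∀ e ≥ N, c * z ^ p ^ e ∈ I.frobeniusPower (p ^ e) ⊔ nilradical A) :
    z ∈ tightClosure p I := by
  obtain ⟨k, hk⟩ := IsNoetherianRing.isNilpotent_nilradical A
  obtain ⟨m, hm⟩ : ∃ m, k ≤ p ^ m := ⟨k, (Nat.lt_pow_self (Fact.out : p.Prime).one_lt).le⟩
  refine ⟨c ^ p ^ m, pow_mem_primeComplement hc _, N + m, fun e' he' => ?_⟩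
  obtain ⟨e, rfl⟩ : ∃ e, e' = m + e := ⟨e' - m, by omega⟩
  obtain ⟨a, ha, b, hb, hab⟩ := Submodule.mem_sup.mp (hN e (by omega))
  have hb0 : b ^ p ^ m = 0 := by
    have := Ideal.pow_le_pow_right hm (Ideal.pow_mem_pow hb (p ^ m))
    rwa [hk, Ideal.zero_eq_bot, Ideal.mem_bot] at this
  have hpow : c ^ p ^ m * z ^ p ^ (m + e) = a ^ p ^ m := by
    rw [pow_add, pow_mul', ← mul_pow, ← hab, add_pow_expChar_pow, hb0, add_zero]
  rw [hpow, ← Ideal.frobeniusPower_frobeniusPower]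
  exact Ideal.pow_mem_frobeniusPower ha _

theorem mem_tightClosure_of_forall_minimalPrimes [IsNoetherianRing A] {I : Ideal A} {z : A}
    (h : ∀ P ∈ minimalPrimes A,
      Ideal.Quotient.mk P z ∈ tightClosure p (I.map (Ideal.Quotient.mk P))) :
    z ∈ tightClosure p I := by
  classical
  have hfin := minimalPrimes.finite_of_isNoetherianRing A
  choose! c hcP N hN using fun P (hP : P ∈ minimalPrimes A) =>
    have := hP.1.1
    exists_mul_pow_mem_sup_of_mk_mem_tightClosure (h P hP)
  choose! d hdP hd using fun P (hP : P ∈ minimalPrimes A) =>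
    exists_notMem_forall_ne_mem_minimalPrimes hP
  have hmem : ∀ P ∈ hfin.toFinset, P ∈ minimalPrimes A := fun P => hfin.mem_toFinset.mp
  refine mem_tightClosure_of_mul_pow_mem_sup_nilradical (c := ∑ P ∈ hfin.toFinset, d P * c P)
    ?_ (hfin.toFinset.sup N) fun e he => ?_
  · -- `d P * c P` is the only summand outside `P`.
    intro P hP hsum
    rw [← Finset.add_sum_erase _ _ (hfin.mem_toFinset.mpr hP)] at hsum
    have hrest : ∑ P' ∈ hfin.toFinset.erase P, d P' * c P' ∈ P :=
      Ideal.sum_mem _ fun P' hP' => P.mul_mem_right _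
        (hd P' (hmem P' (Finset.mem_of_mem_erase hP')) P hP (Finset.ne_of_mem_erase hP').symm)
    rcases hP.1.1.mem_or_mem ((Ideal.add_mem_iff_left _ hrest).mp hsum) with hdP' | hcP'
    · exact hdP P hP hdP'
    · exact hcP P hP hcP'
  · rw [Finset.sum_mul]
    refine Ideal.sum_mem _ fun P hP => ?_
    rw [mul_assoc]
    exact mul_mem_sup_nilradical_of_mem_sup (hd P (hmem P hP))
      (hN P (hmem P hP) e ((Finset.le_sup hP).trans he))

end Combination

theorem Submonoid.exists_mem_forall_mul {M ι : Type*} [CommMonoid M] [Finite ι]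
    (U : Submonoid M) {G : ι → M → Prop} (hG : ∀ i x y, G i y → G i (x * y)) {z : M}
    (h : ∀ i, ∃ w ∈ U, G i (w * z)) : ∃ w ∈ U, ∀ i, G i (w * z) := by
  classical
  have := Fintype.ofFinite ι
  choose w hw hwz using h
  refine ⟨∏ i, w i, U.prod_mem fun i _ => hw i, fun i => ?_⟩
  rw [← Finset.mul_prod_erase _ _ (Finset.mem_univ i), mul_comm (w i), mul_assoc]
  exact hG _ _ _ (hwz i)

section Localization

variable {R S : Type*} [CommRing R] [CommRing S] [CharP R p] [Fact p.Prime]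

theorem exists_mul_mem_map_of_mk'_mem_tightClosure [IsDomain S] (f : R →+* S) {U : Submonoid R}
    (hker : RingHom.ker f ∈ minimalPrimes R) (hU : Disjoint (U : Set R) (RingHom.ker f))
    (hS : ∀ J : Ideal (Localization (U.map f)), tightClosure p J = J) {I : Ideal R} {z : R}
    {u : U} (hz : IsLocalization.mk' (Localization U) z u ∈
      tightClosure p (I.map (algebraMap R (Localization U)))) :
    ∃ w ∈ U, f (w * z) ∈ I.map f := by
  let f' : Localization U →+* Localization (U.map f) :=
    IsLocalization.map _ f U.le_comap_map
  have : IsDomain (Localization (U.map f)) := IsLocalization.isDomain_localization <| by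
    rintro _ ⟨v, hv, rfl⟩
    exact mem_nonZeroDivisors_of_ne_zero fun h0 => Set.disjoint_left.mp hU hv h0
  have : CharP (Localization (U.map f)) p := CharP.of_ringHom_of_prime ((algebraMap S _).comp f)
  have hker' : RingHom.ker f' ∈ minimalPrimes (Localization U) := by
    rw [IsLocalization.ker_map _ f rfl, IsLocalization.mem_minimalPrimes_iff_under U,
      IsLocalization.under_map_of_isPrime_disjoint U _ hker.1.1 hU]
    exact hker
  have hfz := map_mem_tightClosure_map f'
    (fun _ => map_mem_primeComplement_of_ker_mem_minimalPrimes hker') hz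
  rw [hS, SetLike.mem_coe, IsLocalization.map_mk', Ideal.map_map, IsLocalization.map_comp,
    ← Ideal.map_map, IsLocalization.mk'_mem_map_algebraMap_iff] at hfz
  obtain ⟨_, ⟨w, hw, rfl⟩, hwz⟩ := hfz
  exact ⟨w, hw, by rwa [map_mul]⟩

theorem exists_mul_mk_mem_tightClosure_of_mk'_mem_tightClosure {P : Ideal R}
    (hP : P ∈ minimalPrimes R) [IsDomain S] (g : R ⧸ P →+* S) (hg : Function.Injective g)
    (hfin : g.Finite) (hreg : FRegular p S) {U : Submonoid R} {I : Ideal R} {z : R} {u : U}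
    (hz : IsLocalization.mk' (Localization U) z u ∈
      tightClosure p (I.map (algebraMap R (Localization U)))) :
    ∃ w ∈ U, Ideal.Quotient.mk P (w * z) ∈ tightClosure p (I.map (Ideal.Quotient.mk P)) := by
  have := hP.1.1
  have : CharP (R ⧸ P) p := CharP.of_ringHom_of_prime (Ideal.Quotient.mk P)
  by_cases hUP : Disjoint (U : Set R) P
  · have hker : RingHom.ker (g.comp (Ideal.Quotient.mk P)) = P := by
      rw [RingHom.ker_comp_of_injective _ hg, Ideal.mk_ker]
    obtain ⟨w, hw, hwz⟩ := exists_mul_mem_map_of_mk'_mem_tightClosure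
      (g.comp (Ideal.Quotient.mk P)) (by rwa [hker]) (by rwa [hker]) (hreg.2 _) hz
    refine ⟨w, hw, ?_⟩
    let _ := g.toAlgebra
    have : Module.Finite (R ⧸ P) S := hfin
    have : FaithfulSMul (R ⧸ P) S := (faithfulSMul_iff_algebraMap_injective _ _).mpr hg
    rw [← Ideal.map_map] at hwz
    exact mem_tightClosure_of_algebraMap_mem_map (T := S) hwz
  · obtain ⟨w, hw, hwP⟩ := Set.not_disjoint_iff.mp hUP
    refine ⟨w, hw, ?_⟩
    rw [Ideal.Quotient.eq_zero_iff_mem.mpr (P.mul_mem_right z hwP)]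
    exact (Ideal.tightClosure p _).zero_mem

end Localization

end

/-- **Corollary.** If modulo each minimal prime `P`, the domain `R/P` has a
module-finite integral extension domain that is F-regular, then tight closure
commutes with localization in `R`. -/
theorem tightClosure_commutes_localization_of_fRegular_extension
    (p : ℕ) [Fact p.Prime] (R : Type) [CommRing R] [IsNoetherianRing R] [CharP R p]
    (h : ∀ P ∈ minimalPrimes R,
      ∃ (S : Type) (_ : CommRing S) (_ : IsDomain S) (f : (R ⧸ P) →+* S),
        Function.Injective f ∧ f.Finite ∧ f.IsIntegral ∧ FRegular p S) :
    TightClosureCommutesWithLocalization p R := by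
  intro I U
  rcases subsingleton_or_nontrivial (Localization U) with _ | _
  · rw [tightClosure_eq_of_subsingleton (I.map _)]
    exact congrArg SetLike.coe (Subsingleton.elim _ _)
  have : CharP (Localization U) p := CharP.of_ringHom_of_prime (algebraMap R _)
  rw [← Ideal.coe_tightClosure, Ideal.span_eq, ← Ideal.coe_tightClosure]
  refine subset_antisymm (Ideal.map_tightClosure_le _
    (fun _ => IsLocalization.algebraMap_mem_primeComplement U) I) fun x hx => ?_
  obtain ⟨z, u, rfl⟩ := IsLocalization.exists_mk'_eq U x
  rw [SetLike.mem_coe, IsLocalization.mk'_mem_map_algebraMap_iff]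
  have : Finite (minimalPrimes R) := (minimalPrimes.finite_of_isNoetherianRing R).to_subtype
  obtain ⟨w, hw, hwz⟩ := U.exists_mem_forall_mul
    (G := fun (P : minimalPrimes R) y =>
      Ideal.Quotient.mk P.1 y ∈ tightClosure p (I.map (Ideal.Quotient.mk P.1)))
    (fun _ x _ hy => by rw [map_mul]; exact mul_mem_tightClosure _ hy) fun ⟨P, hP⟩ => by
      obtain ⟨S, _, _, g, hg, hfin, -, hreg⟩ := h P hP
      exact exists_mul_mk_mem_tightClosure_of_mk'_mem_tightClosure hP g hg hfin hreg hx
  exact ⟨w, hw, mem_tightClosure_of_forall_minimalPrimes fun P hP => hwz ⟨P, hP⟩⟩
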